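/- For every integer k and integers n ≥ m ≥ 1, one has Σ_{l=0}^{n-m} m! C(n, l+m) S₁(l+m, m) C_{n-l-m}^{(k)} = Σ_{l=0}^{n-m} (m-1)! C(n-1, l+m-1) S₁(l+m-1, m-1) { (m-1) C_{n-l-m}^{(k)}(1) + C_{n-l-m}^{(k-1)}(1) }. -/

import Mathlib

/-!
Write `L = log (1 + t)` and `A_k = Lif_k(L)`. Unwinding the definitions, the left side is
`n! [tⁿ] Lᵐ A_k` and the right side is `(n-1)! [tⁿ⁻¹] Lᵐ⁻¹ ((m-1) A_k + A_{k-1}) L'`, because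
`(1+t)⁻¹ = L'`. The two agree since `n! [tⁿ] F = (n-1)! [tⁿ⁻¹] F'` and, by the chain rule and
`x Lif_k'(x) = Lif_{k-1}(x) - Lif_k(x)`, `(Lᵐ A_k)' = Lᵐ⁻¹ ((m-1) A_k + A_{k-1}) L'`.
-/

open PowerSeries Finset

/-- Composition `F(G(t))` of formal power series (intended for `G` with zero
constant term, in which case `coeff n (G ^ m) = 0` for `m > n` and the finite
sum below computes the usual composition). -/
noncomputable def psComp (F G : PowerSeries ℝ) : PowerSeries ℝ :=
  PowerSeries.mk fun n => ∑ m ∈ Finset.range (n + 1),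
    (PowerSeries.coeff m F) * (PowerSeries.coeff n (G ^ m))

/-- The formal power series of `log (1 + t)`. -/
noncomputable def logSeries : PowerSeries ℝ :=
  PowerSeries.mk fun n => if n = 0 then 0 else (-1) ^ (n + 1) / n

/-- The polylogarithm factorial function `Lif_k(t) = ∑_{m ≥ 0} t^m / (m! (m+1)^k)`. -/
noncomputable def Lif (k : ℤ) : PowerSeries ℝ :=
  PowerSeries.mk fun m => 1 / ((m.factorial : ℝ) * ((m : ℝ) + 1) ^ k)

/-- The poly-Cauchy polynomial of the first kind `C_n^{(k)}(x)`, defined by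
`Lif_k(log(1+t)) / (1+t)^x = ∑_{n ≥ 0} C_n^{(k)}(x) t^n / n!`, where
`(1+t)^{-x} = exp (-x · log (1+t))`. -/
noncomputable def polyCauchy (k : ℤ) (n : ℕ) (x : ℝ) : ℝ :=
  (n.factorial : ℝ) * PowerSeries.coeff n
    (psComp (Lif k) logSeries *
      psComp (PowerSeries.rescale (-x) (PowerSeries.exp ℝ)) logSeries)

/-- The (signed) Stirling numbers of the first kind `S₁(l, m)`, defined by
`(log (1+t))^m = m! ∑_{l ≥ m} S₁(l,m) t^l / l!`. -/
noncomputable def S1 (l m : ℕ) : ℝ :=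
  (l.factorial : ℝ) / (m.factorial : ℝ) * PowerSeries.coeff l (logSeries ^ m)

/-- The ordinary Bernoulli numbers, via `t/(e^t - 1) = ∑ B_n t^n/n!`;
here `(mk fun m => 1/(m+1)!)` is the series `(e^t - 1)/t`. -/
noncomputable def Bern (n : ℕ) : ℝ :=
  (n.factorial : ℝ) * PowerSeries.coeff n
    (PowerSeries.mk fun m => (1 : ℝ) / (m + 1).factorial)⁻¹

/-- The Bernoulli polynomial of order `r`, via `(t/(e^t-1))^r e^{xt} = ∑ B_n^{(r)}(x) t^n/n!`. -/
noncomputable def bernPoly (r : ℕ) (n : ℕ) (x : ℝ) : ℝ :=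
  (n.factorial : ℝ) * PowerSeries.coeff n
    (((PowerSeries.mk fun m => (1 : ℝ) / (m + 1).factorial)⁻¹) ^ r *
      PowerSeries.rescale x (PowerSeries.exp ℝ))

/-- The series `log(1+t)/t`, so that `t / log(1+t) = Dlog⁻¹`. -/
noncomputable def Dlog : PowerSeries ℝ :=
  PowerSeries.mk fun n => (-1) ^ n / ((n : ℝ) + 1)

/-- The Cauchy numbers of the first kind, via `t/log(1+t) = ∑ C_n t^n/n!`. -/
noncomputable def cauchyNum (n : ℕ) : ℝ :=
  (n.factorial : ℝ) * PowerSeries.coeff n Dlog⁻¹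

/-- The numbers `T_n^{(r,k)}`, via
`(t/log(1+t))^r · Lif_k(log(1+t)) = ∑ T_n^{(r,k)} t^n/n!`. -/
noncomputable def T (r : ℕ) (k : ℤ) (n : ℕ) : ℝ :=
  (n.factorial : ℝ) * PowerSeries.coeff n (Dlog⁻¹ ^ r * psComp (Lif k) logSeries)

/-- The rising factorial `x^{(m)} = x (x+1) ⋯ (x+m-1)`. -/
noncomputable def risingFactorial (x : ℝ) (m : ℕ) : ℝ :=
  ∏ i ∈ Finset.range m, (x + i)

/-- Carlitz's polynomials `β_n^{(r)}(x)`, via `(t/log(1+t))^r (1+t)^x = ∑ β_n^{(r)}(x) t^n/n!`,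
where `(1+t)^x = exp (x log (1+t))`. -/
noncomputable def carlitz (r : ℕ) (n : ℕ) (x : ℝ) : ℝ :=
  (n.factorial : ℝ) * PowerSeries.coeff n
    (Dlog⁻¹ ^ r * psComp (PowerSeries.rescale x (PowerSeries.exp ℝ)) logSeries)


namespace PowerSeries

theorem coeff_pow_eq_zero_of_lt {R : Type*} [CommSemiring R] {G : R⟦X⟧}
    (hG : constantCoeff G = 0) {m n : ℕ} (h : n < m) : coeff n (G ^ m) = 0 :=
  X_pow_dvd_iff.mp (pow_dvd_pow_of_dvd (X_dvd_iff.mpr hG) m) n h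

theorem constantCoeff_subst_of_constantCoeff_zero {R : Type*} [CommRing R] {G : R⟦X⟧}
    (hG : constantCoeff G = 0) (F : R⟦X⟧) :
    constantCoeff (F.subst G) = constantCoeff F := by
  rw [← coeff_zero_eq_constantCoeff_apply, coeff_subst' (HasSubst.of_constantCoeff_zero' hG),
    finsum_eq_single _ 0 fun d hd => by
      rw [coeff_pow_eq_zero_of_lt hG (Nat.pos_of_ne_zero hd), smul_zero]]
  simp

theorem coeff_pow_mul_eq_sum {R : Type*} [CommSemiring R] {G : R⟦X⟧}
    (hG : constantCoeff G = 0) (B : R⟦X⟧) {m n : ℕ} (hmn : m ≤ n) :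
    coeff n (G ^ m * B) =
      ∑ l ∈ range (n - m + 1), coeff (l + m) (G ^ m) * coeff (n - l - m) B := by
  rw [coeff_mul, Nat.sum_antidiagonal_eq_sum_range_succ (fun i j => coeff i (G ^ m) * coeff j B),
    show n.succ = m + (n - m + 1) by omega, sum_range_add,
    sum_eq_zero fun i hi => by rw [coeff_pow_eq_zero_of_lt hG (mem_range.mp hi), zero_mul],
    zero_add]
  exact sum_congr rfl fun l _ => by rw [add_comm m l, Nat.sub_sub]

theorem factorial_mul_coeff_succ {R : Type*} [CommSemiring R] (f : R⟦X⟧) (n : ℕ) :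
    ((n + 1).factorial : R) * coeff (n + 1) f = n.factorial * coeff n (d⁄dX R f) := by
  rw [coeff_derivative, Nat.factorial_succ]
  push_cast
  ring

section QAlgebra

variable {A : Type*} [CommRing A] [Algebra ℚ A]

theorem one_add_X_mul_derivative_log : (1 + X) * d⁄dX A (log A) = 1 := by
  ext n
  cases n with
  | zero => simp [deriv_log]
  | succ n => simp [deriv_log, add_mul, coeff_succ_X_mul, pow_succ]

theorem derivative_rescale_neg_one_exp :
    d⁄dX A (rescale (-1 : A) (exp A)) = -rescale (-1 : A) (exp A) := by
  ext n
  simp only [coeff_derivative, coeff_rescale, coeff_exp, map_neg, pow_succ, Nat.factorial_succ]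
  have h : algebraMap ℚ A (1 / ((n + 1) * n.factorial : ℕ)) * (n + 1) =
      algebraMap ℚ A (1 / n.factorial) := by
    rw [← map_natCast (algebraMap ℚ A), ← map_one (algebraMap ℚ A), ← map_add, ← map_mul]
    congr 1
    push_cast
    field_simp
  linear_combination -(-1) ^ n * h

/-- `exp (-log (1 + X)) = (1 + X)⁻¹`: the series `(1 + X) exp (-log (1 + X))` has derivative `0`
and constant term `1`. -/
theorem rescale_neg_one_exp_subst_log :
    (rescale (-1 : A) (exp A)).subst (log A) = d⁄dX A (log A) := by
  set H : A⟦X⟧ := (rescale (-1 : A) (exp A)).subst (log A)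
  have : IsAddTorsionFree A := .of_module_rat A
  have hH : (1 + X) * H = 1 := by
    refine derivative.ext ?_ ?_
    · rw [Derivation.leibniz, smul_eq_mul, smul_eq_mul, derivative_subst HasSubst.log,
        derivative_rescale_neg_one_exp, ← coe_substAlgHom HasSubst.log, map_neg,
        coe_substAlgHom, derivative_one]
      simp only [map_add, derivative_X, derivative_one]
      linear_combination (-H) * one_add_X_mul_derivative_log (A := A)
    · rw [map_mul, constantCoeff_subst_of_constantCoeff_zero (constantCoeff_log (A := A))]
      simp only [map_add, map_one, constantCoeff_X, add_zero, one_mul]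
      rw [← coeff_zero_eq_constantCoeff_apply, coeff_rescale]
      simp
  calc H = H * ((1 + X) * d⁄dX A (log A)) := by rw [one_add_X_mul_derivative_log, mul_one]
    _ = d⁄dX A (log A) := by rw [← mul_assoc, mul_comm H, hH, one_mul]

end QAlgebra

end PowerSeries

theorem psComp_eq_subst {G : ℝ⟦X⟧} (hG : constantCoeff G = 0) (F : ℝ⟦X⟧) :
    psComp F G = F.subst G := by
  ext n
  rw [psComp, coeff_mk, coeff_subst' (HasSubst.of_constantCoeff_zero' hG),
    finsum_eq_sum_of_support_subset _ (s := range (n + 1)) fun d hd => ?_]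
  · simp only [smul_eq_mul]
  · by_contra hdn
    rw [coe_range, Set.mem_Iio, not_lt] at hdn
    exact hd (by simp only [coeff_pow_eq_zero_of_lt hG hdn, smul_zero])

theorem logSeries_eq_log : logSeries = log ℝ := by
  ext n
  simp [logSeries]

theorem X_mul_derivative_Lif (k : ℤ) : X * d⁄dX ℝ (Lif k) = Lif (k - 1) - Lif k := by
  ext n
  rw [map_sub]
  cases n with
  | zero => simp [Lif]
  | succ j =>
    rw [coeff_succ_X_mul, coeff_derivative]
    simp only [Lif, coeff_mk, Nat.factorial_succ]
    have hj : (j : ℝ) + 1 + 1 ≠ 0 := by positivity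
    rw [zpow_sub_one₀ (by push_cast; exact hj)]
    push_cast
    field_simp
    ring

theorem derivative_pow_succ_mul_subst_Lif {G : ℝ⟦X⟧} (hG : HasSubst G) (k : ℤ) (m : ℕ) :
    d⁄dX ℝ (G ^ (m + 1) * (Lif k).subst G) =
      G ^ m * ((C (m : ℝ) * (Lif k).subst G + (Lif (k - 1)).subst G) * d⁄dX ℝ G) := by
  have hLif : G * (d⁄dX ℝ (Lif k)).subst G = (Lif (k - 1)).subst G - (Lif k).subst G := by
    rw [← subst_sub hG, ← X_mul_derivative_Lif, subst_mul hG, subst_X hG]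
  rw [Derivation.leibniz, smul_eq_mul, smul_eq_mul, derivative_pow, derivative_subst hG,
    Nat.add_sub_cancel, Nat.cast_succ, ← map_natCast C m]
  linear_combination (G ^ m * d⁄dX ℝ G) * hLif

theorem polyCauchy_zero_eq (k : ℤ) (j : ℕ) :
    polyCauchy k j 0 = j.factorial * coeff j ((Lif k).subst (log ℝ)) := by
  rw [polyCauchy, logSeries_eq_log, psComp_eq_subst constantCoeff_log,
    psComp_eq_subst constantCoeff_log, neg_zero, rescale_zero_apply, constantCoeff_exp, subst_C,
    map_one, mul_one]

theorem polyCauchy_one_eq (k : ℤ) (j : ℕ) :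
    polyCauchy k j 1 = j.factorial * coeff j ((Lif k).subst (log ℝ) * d⁄dX ℝ (log ℝ)) := by
  rw [polyCauchy, logSeries_eq_log, psComp_eq_subst constantCoeff_log,
    psComp_eq_subst constantCoeff_log, rescale_neg_one_exp_subst_log]

theorem factorial_mul_S1 (l m : ℕ) :
    m.factorial * S1 l m = l.factorial * coeff l (log ℝ ^ m) := by
  rw [S1, logSeries_eq_log]
  field_simp

theorem sum_factorial_mul_choose_mul_S1 (B : ℝ⟦X⟧) {m n : ℕ} (hmn : m ≤ n) :
    ∑ l ∈ range (n - m + 1), (m.factorial : ℝ) * (n.choose (l + m) : ℝ) * S1 (l + m) m *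
        ((n - l - m).factorial * coeff (n - l - m) B) =
      n.factorial * coeff n (log ℝ ^ m * B) := by
  rw [coeff_pow_mul_eq_sum constantCoeff_log B hmn, mul_sum]
  refine sum_congr rfl fun l hl => ?_
  have hchoose : (n.choose (l + m) : ℝ) * (l + m).factorial * (n - l - m).factorial =
      n.factorial := by
    rw [Nat.sub_sub]
    exact_mod_cast Nat.choose_mul_factorial_mul_factorial (by grind)
  linear_combination ((n.choose (l + m) : ℝ) * (n - l - m).factorial * coeff (n - l - m) B) *
      factorial_mul_S1 (l + m) m + (coeff (l + m) (log ℝ ^ m) * coeff (n - l - m) B) * hchoose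

/-- Theorem 5 of the paper. -/
theorem polyCauchy_stirling_identity (k : ℤ) (n m : ℕ) (hm : 1 ≤ m) (hmn : m ≤ n) :
    ∑ l ∈ Finset.range (n - m + 1),
        (m.factorial : ℝ) * (n.choose (l + m) : ℝ) * S1 (l + m) m *
          polyCauchy k (n - l - m) 0 =
      ∑ l ∈ Finset.range (n - m + 1),
        ((m - 1).factorial : ℝ) * ((n - 1).choose (l + m - 1) : ℝ) *
          S1 (l + m - 1) (m - 1) *
          (((m : ℝ) - 1) * polyCauchy k (n - l - m) 1 +
            polyCauchy (k - 1) (n - l - m) 1) := by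
  obtain ⟨m, rfl⟩ : ∃ m', m = m' + 1 := ⟨m - 1, by omega⟩
  obtain ⟨n, rfl⟩ : ∃ n', n = n' + 1 := ⟨n - 1, by omega⟩
  simp only [polyCauchy_zero_eq, polyCauchy_one_eq]
  rw [sum_factorial_mul_choose_mul_S1 _ hmn, factorial_mul_coeff_succ,
    derivative_pow_succ_mul_subst_Lif HasSubst.log,
    ← sum_factorial_mul_choose_mul_S1 _ (by omega : m ≤ n)]
  refine sum_congr (by congr 1; omega) fun l _ => ?_
  rw [show n + 1 - l - (m + 1) = n - l - m by omega, show l + (m + 1) - 1 = l + m by omega]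
  simp only [Nat.add_sub_cancel, Nat.cast_succ, add_sub_cancel_right, add_mul, map_add,
    mul_assoc, coeff_C_mul]
  ring
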